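/- Let C be a connected subcomplex of a genus g triangulation T whose complementary dual D is connected, and let e be a merge edge of C. Then e is non-separating (its dual e* is not a bridge of D), and the merge operation at e — doubling e into two parallel edges delimiting a face of degree 2, and adding this face and the two copies of e to C — leaves D connected, decreases the number of boundary faces of C by 1, decreases the Euler characteristic χ(C) by 1, decreases the Euler characteristic of the map associated with C by 2, and increases the genus of the map associated with C by 1. -/

import Mathlib

set_option linter.unusedSectionVars false

/- ----------------------------------------------------------------
   A formalization of (topological) maps on closed orientable
   surfaces via combinatorial maps: a finite set of brins
   (half-edges/darts), a permutation `next` giving the clockwise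
   order of the brins around their origin vertex, and a fixed-point
   free involution `opp` exchanging the two brins of each edge.
   Vertices are the orbits of `next`, edges the orbits of `opp`,
   faces the orbits of the facial-walk permutation
   `facePerm = opp ∘ next` (the follower of a brin, then its
   opposite).
   ---------------------------------------------------------------- -/

structure CombMap (D : Type) [Fintype D] [DecidableEq D] where
  next : Equiv.Perm D
  opp  : Equiv.Perm D
  opp_invol : ∀ d, opp (opp d) = d
  opp_ne : ∀ d, opp d ≠ d

namespace CombMap

variable {D : Type} [Fintype D] [DecidableEq D]

/-- the facial-walk permutation: `b_{i+1}` is the opposite of the follower of `b_i` -/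
def facePerm (M : CombMap D) : Equiv.Perm D := M.next.trans M.opp

/-- forward orbit of a dart under a function -/
def forb (f : D → D) (d : D) : Set D := {h | ∃ n : ℕ, f^[n] d = h}

/-- number of orbits of `f` met by the (f-invariant) set `s` -/
noncomputable def numOrbitsIn (f : D → D) (s : Set D) : ℕ :=
  ((fun d => forb f d) '' s).ncard

noncomputable def numVertices (M : CombMap D) : ℕ := numOrbitsIn (⇑M.next) Set.univ
noncomputable def numEdges (M : CombMap D) : ℕ := numOrbitsIn (⇑M.opp) Set.univ
noncomputable def numFaces (M : CombMap D) : ℕ := numOrbitsIn (⇑M.facePerm) Set.univ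

noncomputable def eulerChar (M : CombMap D) : ℤ :=
  (numVertices M : ℤ) - (numEdges M : ℤ) + (numFaces M : ℤ)

/-- the genus `g` of the surface on which `M` is embedded: Euler's relation `2 - 2g = |V|-|E|+|F|` -/
def HasGenus (M : CombMap D) (g : ℕ) : Prop := M.eulerChar = 2 - 2 * (g : ℤ)

def Connected (M : CombMap D) : Prop :=
  ∀ d d' : D, Relation.ReflTransGen (fun a b => b = M.next a ∨ b = M.opp a) d d'

/-- the two darts have the same origin vertex -/
def sameVertex (M : CombMap D) (d d' : D) : Prop := d' ∈ forb (⇑M.next) d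

def NoLoops (M : CombMap D) : Prop := ∀ d, ¬ M.sameVertex d (M.opp d)

def NoMultipleEdges (M : CombMap D) : Prop :=
  ∀ d d', M.sameVertex d d' → M.sameVertex (M.opp d) (M.opp d') → d' = d ∨ d' = M.opp d

/-- a triangulation of genus `g`: a connected simple map, all of whose faces have degree 3 -/
structure IsTriang (M : CombMap D) (g : ℕ) : Prop where
  conn : M.Connected
  noLoops : M.NoLoops
  noMult : M.NoMultipleEdges
  deg3 : ∀ d, (⇑M.facePerm)^[3] d = d ∧ M.facePerm d ≠ d
  genus : M.HasGenus g

/- root face: marked by a dart `r`; the root face is the facial orbit of `r`,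
   and the root vertices are `v_i = origin of facePerm^[i] r`, `i = 0,1,2`. -/

def rootDarts (M : CombMap D) (r : D) : Set D := forb (⇑M.facePerm) r

/-- the dart belongs to an edge of the root face (an "outer" edge) -/
def RootEdgeDart (M : CombMap D) (r : D) (h : D) : Prop :=
  h ∈ rootDarts M r ∨ M.opp h ∈ rootDarts M r

/-- the dart belongs to an inner edge -/
def InnerDart (M : CombMap D) (r : D) (h : D) : Prop := ¬ RootEdgeDart M r h

/-- a dart whose origin is the root vertex `v_i` -/
def vDart (M : CombMap D) (r : D) (i : ℕ) : D := (⇑M.facePerm)^[i] r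

/-- `v` (as a dart) is an inner vertex, i.e. not a vertex of the root face -/
def InnerVertex (M : CombMap D) (r : D) (v : D) : Prop :=
  ∀ h ∈ rootDarts M r, ¬ M.sameVertex h v

/- ------------------- subcomplexes ------------------- -/

/-- A subcomplex `C = (V',E',F')` of `M`, encoded by the sets of darts of its
vertices, edges and faces: `Vs` is `next`-closed (a union of vertex orbits),
`Es` is `opp`-closed, `Fs` is `facePerm`-closed, the edges of any chosen face
belong to `C`, and the endpoints of any chosen edge belong to `C`. -/
structure Subcomplex (M : CombMap D) where
  Vs : Set D
  Es : Set D
  Fs : Set D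
  vs_closed : ∀ d ∈ Vs, M.next d ∈ Vs
  es_closed : ∀ d ∈ Es, M.opp d ∈ Es
  fs_closed : ∀ d ∈ Fs, M.facePerm d ∈ Fs
  face_edges : ∀ d ∈ Fs, d ∈ Es
  edge_verts : ∀ d ∈ Es, d ∈ Vs

noncomputable def Subcomplex.eulerChar {M : CombMap D} (C : Subcomplex M) : ℤ :=
  (numOrbitsIn (⇑M.next) C.Vs : ℤ) - (numOrbitsIn (⇑M.opp) C.Es : ℤ)
    + (numOrbitsIn (⇑M.facePerm) C.Fs : ℤ)

/-- first-return time (≥ 1) of the iteration of `f` into `s` -/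
noncomputable def returnSteps (f : Equiv.Perm D) (s : Set D) (d : D) : ℕ :=
  sInf {k | 0 < k ∧ (⇑f)^[k] d ∈ s}

/-- first-return map of `f` into `s`: the follower of `d` within `s` -/
noncomputable def firstReturn (f : Equiv.Perm D) (s : Set D) (d : D) : D :=
  (⇑f)^[returnSteps f s d] d

/-- in the map induced on a set `E2` of darts (rotations given by first return of `next`),
the facial-walk successor: follower within `E2`, then opposite -/
noncomputable def gwalk (M : CombMap D) (E2 : Set D) (d : D) : D :=
  M.opp (firstReturn M.next E2 d)

/-- number of facial walks of the subgraph spanned by the darts `E2` -/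
noncomputable def graphFaces (M : CombMap D) (E2 : Set D) : ℕ :=
  numOrbitsIn (gwalk M E2) E2

def graphFaceOrbits (M : CombMap D) (E2 : Set D) : Set (Set D) :=
  {s | ∃ d ∈ E2, s = forb (gwalk M E2) d}

/-- the facial-walk successor on the boundary of a subcomplex -/
noncomputable def Subcomplex.bwalk {M : CombMap D} (C : Subcomplex M) : D → D :=
  gwalk M C.Es

/-- a boundary brin: a brin of `C` lying on a facial walk of `C` which does not
bound a face of `C` (for `Fs` a union of full face orbits these are the brins
of `Es \ Fs`); it is identified with the boundary corner it starts -/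
def Subcomplex.BoundaryBrin {M : CombMap D} (C : Subcomplex M) (d : D) : Prop :=
  d ∈ C.Es ∧ d ∉ C.Fs

/-- number of boundary faces of `C` (one disk attached to each boundary walk) -/
noncomputable def Subcomplex.numBoundaryFaces {M : CombMap D} (C : Subcomplex M) : ℕ :=
  numOrbitsIn C.bwalk (C.Es \ C.Fs)

/-- Euler characteristic of the map associated with `C` (disks attached) -/
noncomputable def Subcomplex.assocEulerChar {M : CombMap D} (C : Subcomplex M) : ℤ :=
  C.eulerChar + (C.numBoundaryFaces : ℤ)

/-- the map associated with `C` has genus `g'` -/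
def Subcomplex.assocHasGenus {M : CombMap D} (C : Subcomplex M) (g' : ℤ) : Prop :=
  C.assocEulerChar = 2 - 2 * g'

/-- the exterior brins incident to the boundary corner at the boundary brin `d`:
the brins of `M \ C` strictly between `d` and its follower within `C`,
in cw order around the origin of `d` -/
def Subcomplex.cornerExterior {M : CombMap D} (C : Subcomplex M) (d : D) : Set D :=
  {g | ∃ j, 0 < j ∧ j < returnSteps M.next C.Es d ∧ g = (⇑M.next)^[j] d}

/-- a chordal edge: an edge of `M \ C` whose two brins are exterior brins
of boundary corners of `C` -/
def Subcomplex.Chordal {M : CombMap D} (C : Subcomplex M) (h : D) : Prop :=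
  h ∉ C.Es ∧ M.opp h ∉ C.Es ∧
  (∃ d, C.BoundaryBrin d ∧ h ∈ C.cornerExterior d) ∧
  (∃ d, C.BoundaryBrin d ∧ M.opp h ∈ C.cornerExterior d)

/-- a free boundary corner: no exterior edge of the corner is chordal -/
def Subcomplex.FreeCorner {M : CombMap D} (C : Subcomplex M) (d : D) : Prop :=
  C.BoundaryBrin d ∧ ∀ g ∈ C.cornerExterior d, ¬ C.Chordal g

/-- connectivity (through vertices and edges of `C`, avoiding the edges of `A`) -/
def Subcomplex.reachAvoiding {M : CombMap D} (C : Subcomplex M) (A : Set D) (a b : D) : Prop :=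
  Relation.ReflTransGen (fun x y =>
    (x ∈ C.Vs ∧ y ∈ C.Vs ∧ M.sameVertex x y) ∨
    (x ∈ C.Es ∧ x ∉ A ∧ M.opp x ∉ A ∧ y = M.opp x)) a b

def Subcomplex.Conn {M : CombMap D} (C : Subcomplex M) : Prop :=
  ∀ a ∈ C.Vs, ∀ b ∈ C.Vs, C.reachAvoiding ∅ a b

/-- a bridge: an edge whose removal disconnects the subcomplex -/
def Subcomplex.Bridge {M : CombMap D} (C : Subcomplex M) (h : D) : Prop :=
  h ∈ C.Es ∧ ¬ (∀ a ∈ C.Vs, ∀ b ∈ C.Vs, C.reachAvoiding {h, M.opp h} a b)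

/-- two boundary corners lie on the same boundary walk (boundary face) of `C` -/
def Subcomplex.SameBoundaryFace {M : CombMap D} (C : Subcomplex M) (a b : D) : Prop :=
  b ∈ forb C.bwalk a ∨ a ∈ forb C.bwalk b

/- ------------------- duality ------------------- -/

/-- the dual map: same darts, vertices of the dual are the faces of `M`
(rotation given by the facial walks), and `opp` unchanged. Under this
encoding the dual brin `h*` of a brin `h` is `h` itself. -/
def dual (M : CombMap D) : CombMap D where
  next := M.facePerm
  opp := M.opp
  opp_invol := M.opp_invol
  opp_ne := M.opp_ne

lemma perm_inv_mem (f : Equiv.Perm D) (s : Set D)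
    (hs : ∀ d ∈ s, f d ∈ s) : ∀ d ∈ s, f.symm d ∈ s := by
  have hiter : ∀ n : ℕ, ∀ d ∈ s, (⇑f)^[n] d ∈ s := by
    intro n
    induction n with
    | zero => intro d hd; simpa using hd
    | succ n ih => intro d hd; rw [Function.iterate_succ_apply]; exact ih _ (hs d hd)
  intro d hd
  have hpos : 0 < orderOf f := orderOf_pos f
  have hfix : (⇑f)^[orderOf f] d = d := by
    rw [← Equiv.Perm.coe_pow, pow_orderOf_eq_one]; rfl
  have h2 : (⇑f)^[orderOf f] d = f ((⇑f)^[orderOf f - 1] d) := by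
    conv_lhs => rw [← Nat.sub_add_cancel hpos]
    rw [Function.iterate_succ_apply']
  have hkey : f.symm d = (⇑f)^[orderOf f - 1] d := by
    apply f.injective
    rw [Equiv.apply_symm_apply, ← h2, hfix]
  rw [hkey]
  exact hiter _ d hd

lemma dual_facePerm (M : CombMap D) (d : D) : (dual M).facePerm d = M.next d := by
  simp [dual, facePerm, Equiv.trans_apply, M.opp_invol]

/-- the complementary dual of a subcomplex `C` of `M`: the subcomplex of the dual
map formed by the vertices dual to unchosen faces, edges dual to unchosen edges,
and faces dual to unchosen vertices -/
def Subcomplex.compDual {M : CombMap D} (C : Subcomplex M) : Subcomplex (dual M) where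
  Vs := C.Fsᶜ
  Es := C.Esᶜ
  Fs := C.Vsᶜ
  vs_closed := by
    intro d hd hmem
    have hmem' : M.facePerm d ∈ C.Fs := hmem
    exact hd (by
      have := perm_inv_mem M.facePerm C.Fs C.fs_closed _ hmem'
      simpa using this)
  es_closed := by
    intro d hd hmem
    have hmem' : M.opp d ∈ C.Es := hmem
    exact hd (by
      have := perm_inv_mem M.opp C.Es C.es_closed _ hmem'
      simpa using this)
  fs_closed := by
    intro d hd hmem
    rw [dual_facePerm] at hmem
    exact hd (by
      have := perm_inv_mem M.next C.Vs C.vs_closed _ hmem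
      simpa using this)
  face_edges := by
    intro d hd hmem
    exact hd (C.edge_verts _ hmem)
  edge_verts := by
    intro d hd hmem
    exact hd (C.face_edges _ hmem)

/- ------------------- complete boundary walks ------------------- -/

open Classical in
/-- the successor along the complete list of brins of a boundary walk
(boundary brins interleaved with the exterior brins of each boundary corner) -/
noncomputable def cwalk (M : CombMap D) (E2 : Set D) (h : D) : D :=
  if M.next h ∈ E2 then M.opp (M.next h) else M.next h

noncomputable def Subcomplex.completeWalk {M : CombMap D} (C : Subcomplex M) : D → D :=
  cwalk M C.Es

/-- brins appearing on some complete boundary walk of `C` -/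
def Subcomplex.walkSupport {M : CombMap D} (C : Subcomplex M) : Set D :=
  {h | ∃ d, C.BoundaryBrin d ∧ h ∈ forb C.completeWalk d}

/-- the complete boundary walks of `C`, as sets of brins -/
def Subcomplex.boundaryOrbits {M : CombMap D} (C : Subcomplex M) : Set (Set D) :=
  {s | ∃ d, C.BoundaryBrin d ∧ s = forb C.completeWalk d}

noncomputable def Subcomplex.walkPeriod {M : CombMap D} (C : Subcomplex M) (d : D) : ℕ :=
  sInf {n | 0 < n ∧ (C.completeWalk)^[n] d = d}

open Classical in
/-- the dual brin map of Lemma `boundary`: `φ(h) = h*` if `h ∈ C`,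
`φ(h) = opposite(h*)` otherwise (recall `h* = h` in our encoding of the dual) -/
noncomputable def dphi (M : CombMap D) (C : Subcomplex M) (h : D) : D :=
  if h ∈ C.Es then h else M.opp h

/-- same edge (as darts) -/
def SameEdgeDart (M : CombMap D) (a b : D) : Prop := b = a ∨ b = M.opp a

/- ------------------- the traversal operations ------------------- -/

/-- the darts of the faces of `M \ C` incident to the boundary corner at `d`,
together with all darts on these faces -/
def Subcomplex.cornerFaceDarts {M : CombMap D} (C : Subcomplex M) (d : D) : Set D :=
  {g | ∃ j, j < returnSteps M.next C.Es d ∧ g ∈ forb (⇑M.facePerm) ((⇑M.next)^[j] d)}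

/-- the operation `conquer(b)` at a free boundary corner `b = d`: add to `C` all
exterior faces incident to `b`, together with their edges and vertices -/
def IsConquer {M : CombMap D} (C : Subcomplex M) (d : D) (C' : Subcomplex M) : Prop :=
  C.FreeCorner d ∧
  C'.Fs = C.Fs ∪ C.cornerFaceDarts d ∧
  C'.Es = C.Es ∪ C.cornerFaceDarts d ∪ (⇑M.opp) '' C.cornerFaceDarts d ∧
  C'.Vs = C.Vs ∪ {g | ∃ h ∈ C'.Es, g ∈ forb (⇑M.next) h}

/-- adding a (split or merge) chordal edge `h` to `C` -/
def IsAddEdge {M : CombMap D} (C : Subcomplex M) (h : D) (C' : Subcomplex M) : Prop :=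
  C'.Fs = C.Fs ∧ C'.Es = C.Es ∪ {h, M.opp h} ∧ C'.Vs = C.Vs

/-- a split edge: a non-separating chordal edge (its dual is not a bridge of the
complementary dual) whose two brins are incident to boundary corners lying in
the same boundary face of `C` -/
def Subcomplex.SplitEdge {M : CombMap D} (C : Subcomplex M) (h : D) : Prop :=
  C.Chordal h ∧ ¬ C.compDual.Bridge h ∧
  ∀ d d', C.BoundaryBrin d → h ∈ C.cornerExterior d →
    C.BoundaryBrin d' → M.opp h ∈ C.cornerExterior d' → C.SameBoundaryFace d d'

/-- a merge edge: a chordal edge whose two brins are incident to boundary corners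
lying in distinct boundary faces of `C` -/
def Subcomplex.MergeEdge {M : CombMap D} (C : Subcomplex M) (h : D) : Prop :=
  C.Chordal h ∧
  ∃ d d', C.BoundaryBrin d ∧ h ∈ C.cornerExterior d ∧
    C.BoundaryBrin d' ∧ M.opp h ∈ C.cornerExterior d' ∧ ¬ C.SameBoundaryFace d d'

/-- the initial subcomplex: the root face together with its edges and vertices -/
def IsRootComplex (M : CombMap D) (r : D) (C : Subcomplex M) : Prop :=
  C.Fs = rootDarts M r ∧
  C.Es = rootDarts M r ∪ (⇑M.opp) '' rootDarts M r ∧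
  C.Vs = {g | ∃ h ∈ C.Es, g ∈ forb (⇑M.next) h}

def IsFull {M : CombMap D} (C : Subcomplex M) : Prop :=
  C.Fs = Set.univ ∧ C.Es = Set.univ ∧ C.Vs = Set.univ

/-- one (uncolored) step of the traversal: a conquest, a split, or a merge -/
def PlainStep (M : CombMap D) (C C' : Subcomplex M) : Prop :=
  (∃ d, IsConquer C d C') ∨ (∃ h, (C.SplitEdge h ∨ C.MergeEdge h) ∧ IsAddEdge C h C')

/-- a subcomplex reachable from the root face by traversal steps -/
def ExecReach (M : CombMap D) (r : D) (C : Subcomplex M) : Prop :=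
  ∃ C0, IsRootComplex M r C0 ∧ Relation.ReflTransGen (PlainStep M) C0 C

/- ------------------- the colorient rule ------------------- -/

/-- the `colorient` rule at the free boundary corner `d` (with `d'` the follower
of `d` within `C`): the edge of `d` is oriented out of the corner vertex with
color 1, the edge of `d'` is oriented outward with color 0, and all exterior
edges of the corner are oriented toward the corner vertex with color 2 (on
non-special inner edges the opposite dart records the same edge seen from the
other endpoint; each dart of a special edge records its own copy). -/
def ColorientEq (M : CombMap D) (r : D) (C : Subcomplex M) (d : D)
    (dir : D → Bool) (col : D → Fin 3) (special : Set D) : Prop :=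
  (InnerDart M r d → dir d = true ∧ col d = 1 ∧
      (d ∉ special → dir (M.opp d) = false ∧ col (M.opp d) = 1)) ∧
  (InnerDart M r (firstReturn M.next C.Es d) →
      dir (firstReturn M.next C.Es d) = true ∧ col (firstReturn M.next C.Es d) = 0 ∧
      (firstReturn M.next C.Es d ∉ special →
        dir (M.opp (firstReturn M.next C.Es d)) = false ∧
        col (M.opp (firstReturn M.next C.Es d)) = 0)) ∧
  (∀ j, 0 < j → j < returnSteps M.next C.Es d → InnerDart M r ((⇑M.next)^[j] d) →
      dir ((⇑M.next)^[j] d) = false ∧ col ((⇑M.next)^[j] d) = 2 ∧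
      dir (M.opp ((⇑M.next)^[j] d)) = true ∧ col (M.opp ((⇑M.next)^[j] d)) = 2)

/-- one step of `ComputeSchnyderAnyGenus`, recording colors and orientations -/
def GStep (M : CombMap D) (r : D) (C C' : Subcomplex M)
    (dir : D → Bool) (col : D → Fin 3) (special : Set D) : Prop :=
  (∃ d, IsConquer C d C' ∧ ColorientEq M r C d dir col special) ∨
  (∃ h ∈ special, (C.SplitEdge h ∨ C.MergeEdge h) ∧ IsAddEdge C h C')

/-- a complete execution of the traversal algorithm `ComputeSchnyderAnyGenus`
on `M` with root face at `r`, producing the orientation `dir`, the coloring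
`col` and the set `special` of darts of the (split/merge) special edges -/
structure GExec (M : CombMap D) (r : D)
    (dir : D → Bool) (col : D → Fin 3) (special : Set D) where
  N : ℕ
  Cs : ℕ → Subcomplex M
  init : IsRootComplex M r (Cs 0)
  final : IsFull (Cs N)
  step : ∀ k < N, GStep M r (Cs k) (Cs (k + 1)) dir col special
  special_opp : ∀ h ∈ special, M.opp h ∈ special
  special_added : ∀ h ∈ special, ∃ k < N, ∃ h',
      ((Cs k).SplitEdge h' ∨ (Cs k).MergeEdge h') ∧ IsAddEdge (Cs k) h' (Cs (k + 1)) ∧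
      (h = h' ∨ h = M.opp h')

/-- an execution of the planar traversal algorithm (conquests only) -/
structure PlanarExec (M : CombMap D) (r : D) (dir : D → Bool) (col : D → Fin 3) where
  N : ℕ
  Cs : ℕ → Subcomplex M
  init : IsRootComplex M r (Cs 0)
  final : IsFull (Cs N)
  step : ∀ k < N, ∃ d, IsConquer (Cs k) d (Cs (k + 1)) ∧
      ColorientEq M r (Cs k) d dir col ∅

/-- a boundary brin of the edge `{v₀,v₁}` (marking the boundary face `f₀`) -/
def RootBoundaryBrin (M : CombMap D) (r : D) (C : Subcomplex M) (d0 : D) : Prop :=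
  C.BoundaryBrin d0 ∧ M.sameVertex (vDart M r 0) d0 ∧ M.sameVertex (vDart M r 1) (M.opp d0)

/-- the implementation of the traversal that always chooses an update-candidate
incident to the boundary face containing `{v₀,v₁}` and gives priority to free
boundary corners over split and merge edges -/
def PriorityRun {M : CombMap D} (r : D) {dir : D → Bool} {col : D → Fin 3}
    {special : Set D} (E : GExec M r dir col special) : Prop :=
  ∀ k < E.N,
    (∀ d, IsConquer (E.Cs k) d (E.Cs (k + 1)) →
        ∃ d0, RootBoundaryBrin M r (E.Cs k) d0 ∧ (E.Cs k).SameBoundaryFace d0 d) ∧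
    (∀ h, ((E.Cs k).SplitEdge h ∨ (E.Cs k).MergeEdge h) →
        IsAddEdge (E.Cs k) h (E.Cs (k + 1)) →
        (¬ ∃ d d0, RootBoundaryBrin M r (E.Cs k) d0 ∧ (E.Cs k).FreeCorner d ∧
            (E.Cs k).SameBoundaryFace d0 d) ∧
        (∃ d d0, RootBoundaryBrin M r (E.Cs k) d0 ∧ (E.Cs k).BoundaryBrin d ∧
            (E.Cs k).SameBoundaryFace d0 d ∧
            (h ∈ (E.Cs k).cornerExterior d ∨ M.opp h ∈ (E.Cs k).cornerExterior d)))

/- ------------------- Schnyder woods ------------------- -/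

/-- the word pattern `Seq(In 1), Out 0, Seq(In 2), Out 1, Seq(In 0)` on values
`(outgoing?, color)` read in ccw order -/
def SchnyderPattern (l : List (Bool × Fin 3)) : Prop :=
  ∃ a b c : ℕ, l = List.replicate a ((false : Bool), (1 : Fin 3)) ++
    [((true : Bool), (0 : Fin 3))] ++ List.replicate b ((false : Bool), (2 : Fin 3)) ++
    [((true : Bool), (1 : Fin 3))] ++ List.replicate c ((false : Bool), (0 : Fin 3))

noncomputable def vdeg (M : CombMap D) (v : D) : ℕ := (forb (⇑M.next) v).ncard

/-- the ccw successor around the origin vertex -/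
noncomputable def ccwSucc (M : CombMap D) : D → D := ⇑M.next.symm

/-- the darts strictly after `s` in ccw order around its origin, one full turn -/
noncomputable def ccwTail (M : CombMap D) (s : D) : List D :=
  (List.range (vdeg M s - 1)).map fun i => (ccwSucc M)^[i + 1] s

open Classical in
/-- the darts of the sector starting right after the delimiter `s` (in ccw order),
up to the next delimiter -/
noncomputable def sectorDarts (M : CombMap D) (P : D → Prop) (s : D) : List D :=
  (ccwTail M s).takeWhile fun g => decide (¬ P g)

noncomputable def nextDelim (M : CombMap D) (P : D → Prop) (s : D) : D :=
  (ccwSucc M)^[(sectorDarts M P s).length + 1] s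

open Classical in
/-- the sequence of values `(outgoing?, color)` of the inner edges of the sector
that follows the delimiter `s` in ccw order around the origin of `s`.  A special
edge is doubled into two copies enclosing a special face: the copy recorded on the
dart `g` itself appears at the end of the sector preceding the special face of `g`,
and the copy recorded on `M.opp g` (seen from the origin of `g`, hence with
direction flipped) appears at the beginning of the sector following it.  When
`excl2 = true` (local condition at an inner vertex), a copy which is the outgoing
edge of color 2 is excluded from its sector. -/
noncomputable def sectorVals (M : CombMap D) (r : D) (special : Set D)
    (dir : D → Bool) (col : D → Fin 3) (P : D → Prop) (excl2 : Bool) (s : D) :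
    List (Bool × Fin 3) :=
  (if s ∈ special ∧ ¬ (excl2 = true ∧ (!(dir (M.opp s)), col (M.opp s)) =
      ((true : Bool), (2 : Fin 3)))
    then [((!(dir (M.opp s))), col (M.opp s))] else []) ++
  ((sectorDarts M P s).filter fun g => decide (InnerDart M r g)).map
      (fun g => (dir g, col g)) ++
  (if nextDelim M P s ∈ special ∧ ¬ (excl2 = true ∧
      (dir (nextDelim M P s), col (nextDelim M P s)) = ((true : Bool), (2 : Fin 3)))
    then [(dir (nextDelim M P s), col (nextDelim M P s))] else [])

/-- delimiters around an inner vertex: the special darts and the outgoing dart of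
color 2 -/
def innerDelim (special : Set D) (dir : D → Bool) (col : D → Fin 3) (g : D) : Prop :=
  g ∈ special ∨ (dir g = true ∧ col g = 2)

/-- delimiters around the root vertex `v_i`: the special darts and the root-face
corner (at the root dart `vDart M r i`) -/
def rootDelim (M : CombMap D) (r : D) (special : Set D) (i : ℕ) (g : D) : Prop :=
  g ∈ special ∨ g = vDart M r i

/-- local condition at an inner vertex `v`: exactly one outgoing edge (occurrence)
of color 2, and every sector (maximal interval avoiding the special faces and this
edge) reads `Seq(In 1), Out 0, Seq(In 2), Out 1, Seq(In 0)` in ccw order -/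
def LocalVertexCond (M : CombMap D) (r : D) (special : Set D)
    (dir : D → Bool) (col : D → Fin 3) (v : D) : Prop :=
  (∃! gc : D × Bool, M.sameVertex v gc.1 ∧
      cond gc.2 (gc.1 ∈ special ∧ dir (M.opp gc.1) = false ∧ col (M.opp gc.1) = 2)
        (dir gc.1 = true ∧ col gc.1 = 2)) ∧
  ∀ s, M.sameVertex v s → innerDelim special dir col s →
    SchnyderPattern (sectorVals M r special dir col (innerDelim special dir col) true s)

/-- root-face condition at `v_i` (`i = 0` or `1`): all inner edges of the root
sector are ingoing of color `i`, and every other sector reads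
`Seq(In 1), Out 0, Seq(In 2), Out 1, Seq(In 0)` in ccw order -/
def RootVertexCond (M : CombMap D) (r : D) (special : Set D)
    (dir : D → Bool) (col : D → Fin 3) (i : Fin 3) : Prop :=
  (∀ p ∈ sectorVals M r special dir col (rootDelim M r special (i : ℕ)) false
      (vDart M r (i : ℕ)), p = ((false : Bool), i)) ∧
  (∀ s, M.sameVertex (vDart M r (i : ℕ)) s → s ∈ special →
      SchnyderPattern (sectorVals M r special dir col
        (rootDelim M r special (i : ℕ)) false s))

/-- a cut-graph: a spanning cellular subgraph with a unique face, i.e. a connected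
spanning subgraph whose complement on the surface is a single open disk -/
def IsCutGraph (M : CombMap D) (gT : ℕ) (E2 : Set D) : Prop :=
  (∀ h ∈ E2, M.opp h ∈ E2) ∧
  (∀ v : D, ∃ h ∈ E2, M.sameVertex v h) ∧
  (∀ a ∈ E2, ∀ b ∈ E2, Relation.ReflTransGen
      (fun x y => x ∈ E2 ∧ y ∈ E2 ∧ (M.sameVertex x y ∨ y = M.opp x)) a b) ∧
  graphFaces M E2 = 1 ∧
  ((M.numVertices : ℤ) - (numOrbitsIn (⇑M.opp) E2 : ℤ)) + 1 = 2 - 2 * (gT : ℤ)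

/-- the darts of the cut-graph `G₂`: the (non-special) edges of color 2, the two
root edges `{v₀,v₂}` and `{v₁,v₂}`, and the special edges (not doubled) -/
def G2darts (M : CombMap D) (r : D) (special : Set D) (col : D → Fin 3) : Set D :=
  {h | InnerDart M r h ∧ h ∉ special ∧ col h = 2} ∪ special ∪
  {h | RootEdgeDart M r h ∧ (M.sameVertex (vDart M r 2) h ∨
      M.sameVertex (vDart M r 2) (M.opp h))}

/-- the edges of color 2 form a tree spanning all vertices except `v₀` and `v₁`,
rooted at `v₂` with all edges directed toward `v₂` -/
def Tree2Cond (M : CombMap D) (r : D) (special : Set D)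
    (dir : D → Bool) (col : D → Fin 3) : Prop :=
  (∀ h, InnerDart M r h → h ∉ special → col h = 2 →
      ¬ M.sameVertex (vDart M r 0) h ∧ ¬ M.sameVertex (vDart M r 1) h) ∧
  (∀ v : D, ¬ M.sameVertex (vDart M r 0) v → ¬ M.sameVertex (vDart M r 1) v →
      ¬ M.sameVertex (vDart M r 2) v →
      ∃! h, M.sameVertex v h ∧ InnerDart M r h ∧ h ∉ special ∧ col h = 2 ∧
        dir h = true) ∧
  (∀ h, M.sameVertex (vDart M r 2) h →
      ¬ (InnerDart M r h ∧ h ∉ special ∧ col h = 2 ∧ dir h = true)) ∧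
  (∀ v : D, ¬ M.sameVertex (vDart M r 0) v → ¬ M.sameVertex (vDart M r 1) v →
      Relation.ReflTransGen (fun a b => ∃ h, M.sameVertex a h ∧ InnerDart M r h ∧
          h ∉ special ∧ col h = 2 ∧ dir h = true ∧ M.sameVertex b (M.opp h))
        v (vDart M r 2))

/-- a `g`-Schnyder wood of a genus-`gT` triangulation with root face at `r`:
the inner edges are partitioned into normal edges and special edges (set of
darts `special`, each special edge carrying two independently directed and
colored copies, recorded on its two darts), every edge is directed and colored
in `{0,1,2}`, subject to the root-face condition, the local condition for inner
vertices and the cut-graph condition -/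
structure IsGSchnyderWood (M : CombMap D) (r : D) (gT : ℕ)
    (special : Set D) (dir : D → Bool) (col : D → Fin 3) : Prop where
  special_opp : ∀ h ∈ special, M.opp h ∈ special
  special_inner : ∀ h ∈ special, InnerDart M r h
  consistent : ∀ h, InnerDart M r h → h ∉ special →
      dir (M.opp h) = !dir h ∧ col (M.opp h) = col h
  v2_nospecial : ∀ g, M.sameVertex (vDart M r 2) g → g ∉ special
  v2_in2 : ∀ g, M.sameVertex (vDart M r 2) g → InnerDart M r g →
      dir g = false ∧ col g = 2
  root0 : RootVertexCond M r special dir col 0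
  root1 : RootVertexCond M r special dir col 1
  local_inner : ∀ v, InnerVertex M r v → LocalVertexCond M r special dir col v
  tree2 : Tree2Cond M r special dir col
  cut : IsCutGraph M gT (G2darts M r special col)

/-- a Schnyder wood of a plane triangulation (Definition of Schnyder): an
orientation and coloring of the inner edges such that all inner edges incident
to `v_i` are ingoing of color `i`, and around each inner vertex the edges read,
in ccw order: `Out 2, Seq(In 1), Out 0, Seq(In 2), Out 1, Seq(In 0)` -/
structure IsPlanarSchnyderWood (M : CombMap D) (r : D)
    (dir : D → Bool) (col : D → Fin 3) : Prop where
  consistent : ∀ h, InnerDart M r h → dir (M.opp h) = !dir h ∧ col (M.opp h) = col h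
  root_cond : ∀ i : Fin 3, ∀ g, M.sameVertex (vDart M r (i : ℕ)) g →
      InnerDart M r g → dir g = false ∧ col g = i
  local_cond : ∀ v, InnerVertex M r v → LocalVertexCond M r ∅ dir col v


/-! Adding the merge edge `e` changes the boundary walk of `C` only at the two corners holding
its brins: `d ↦ bwalk d` and `d' ↦ bwalk d'` become `d ↦ opp e ↦ bwalk d'` and
`d' ↦ e ↦ bwalk d`. This splices the two distinct boundary walks through `d` and `d'` into one,
so one boundary face is lost while one edge is gained, and the Euler characteristics follow.

For the dual statements, the complete boundary walk starting at `e` runs around the boundary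
face of `d` back to `e` and never meets `opp e`, which lies in a corner of the other face. Read
in the complementary dual it is a path between the two ends of `e*` that avoids `e*`, so `e*` is
not a bridge and deleting it keeps the complementary dual connected. -/

open Function Set

section Orbits

variable {f g : D → D} {s S : Set D} {a b x y : D}

lemma mem_forb_self (f : D → D) (x : D) : x ∈ forb f x := ⟨0, rfl⟩

lemma apply_mem_forb (f : D → D) (x : D) : f x ∈ forb f x := ⟨1, rfl⟩

lemma forb_subset_of_mem (h : y ∈ forb f x) : forb f y ⊆ forb f x := by
  rintro _ ⟨m, rfl⟩
  obtain ⟨n, rfl⟩ := h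
  exact ⟨m + n, iterate_add_apply f m n x⟩

lemma forb_subset_of_forall_mem (hx : x ∈ S) (h : ∀ w ∈ forb f x, w ∈ S → f w ∈ S) :
    forb f x ⊆ S := by
  rintro _ ⟨n, rfl⟩
  induction n with
  | zero => exact hx
  | succ n ih => rw [iterate_succ_apply']; exact h _ ⟨n, rfl⟩ ih

lemma forb_subset_of_mapsTo (hs : MapsTo f s s) (hx : x ∈ s) : forb f x ⊆ s :=
  forb_subset_of_forall_mem hx fun _ _ hw => hs hw

lemma mem_forb_symm (hx : x ∈ periodicPts f) (hy : y ∈ forb f x) : x ∈ forb f y := by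
  obtain ⟨n, hn, hper⟩ := hx
  obtain ⟨k, rfl⟩ := hy
  refine ⟨n * (k + 1) - k, ?_⟩
  rw [← iterate_add_apply, Nat.sub_add_cancel (by nlinarith)]
  exact (hper.mul_const (k + 1)).eq

lemma forb_eq_of_mem (hx : x ∈ periodicPts f) (hy : y ∈ forb f x) : forb f y = forb f x :=
  (forb_subset_of_mem hy).antisymm (forb_subset_of_mem (mem_forb_symm hx hy))

lemma mem_periodicPts_of_mapsTo (hs : MapsTo f s s) (hf : InjOn f s) (hx : x ∈ s) :
    x ∈ periodicPts f := by
  obtain ⟨n, hn, hper⟩ := (hs.restrict_inj.mpr hf).mem_periodicPts ⟨x, hx⟩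
  refine ⟨n, hn, ?_⟩
  simpa [IsPeriodicPt, IsFixedPt, hs.coe_iterate_restrict] using congrArg Subtype.val hper.eq

lemma mapsTo_sdiff_forb (hs : MapsTo f s s) (hper : s ⊆ periodicPts f) :
    MapsTo f (s \ forb f x) (s \ forb f x) := fun z hz =>
  ⟨hs hz.1, fun h =>
    hz.2 (forb_subset_of_mem h (mem_forb_symm (hper hz.1) (apply_mem_forb f z)))⟩

lemma forb_subset_of_agree (hx : x ∈ periodicPts f) (hstart : f x ∈ forb g y)
    (hagree : ∀ w ∈ forb f x, w ≠ x → g w = f w) : forb f x ⊆ forb g y := by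
  rw [← forb_eq_of_mem hx (apply_mem_forb f x)]
  refine forb_subset_of_forall_mem hstart fun w hw hwy => ?_
  by_cases hwx : w = x
  · rwa [hwx]
  · rw [← hagree w (forb_subset_of_mem (apply_mem_forb f x) hw) hwx]
    exact forb_subset_of_mem hwy (apply_mem_forb g w)

lemma numOrbitsIn_union_forb (hs : MapsTo f s s) (ha : a ∈ periodicPts f) (has : a ∉ s) :
    numOrbitsIn f (s ∪ forb f a) = numOrbitsIn f s + 1 := by
  have himage : (fun z => forb f z) '' forb f a = {forb f a} := by
    refine eq_singleton_iff_unique_mem.mpr ⟨⟨a, mem_forb_self f a, rfl⟩, ?_⟩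
    rintro _ ⟨z, hz, rfl⟩
    exact forb_eq_of_mem ha hz
  have hnew : forb f a ∉ (fun z => forb f z) '' s := by
    rintro ⟨z, hz, hza : forb f z = forb f a⟩
    exact has (forb_subset_of_mapsTo hs hz (hza ▸ mem_forb_self f a))
  rw [numOrbitsIn, numOrbitsIn, image_union, himage, union_singleton,
    ncard_insert_of_notMem hnew (toFinite _)]

lemma numOrbitsIn_eq_sdiff_forb_add_one (hs : MapsTo f s s) (hper : s ⊆ periodicPts f)
    (hx : x ∈ s) : numOrbitsIn f s = numOrbitsIn f (s \ forb f x) + 1 := by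
  rw [← numOrbitsIn_union_forb (mapsTo_sdiff_forb hs hper) (hper hx)
      (fun h => h.2 (mem_forb_self f x)),
    sdiff_union_of_subset (forb_subset_of_mapsTo hs hx)]

lemma numOrbitsIn_congr (h : ∀ z ∈ s, forb g z = forb f z) :
    numOrbitsIn g s = numOrbitsIn f s := by
  rw [numOrbitsIn, numOrbitsIn, image_congr h]

/-- Rerouting `x ↦ a ↦ f y` and `y ↦ b ↦ f x` merges the distinct cycles of `x` and `y`. -/
theorem numOrbitsIn_splice (hs : MapsTo f s s) (hf : InjOn f s)
    (hgs : MapsTo g (s ∪ {a, b}) (s ∪ {a, b})) (hg : InjOn g (s ∪ {a, b}))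
    (hx : x ∈ s) (hy : y ∈ s) (hxy : y ∉ forb f x)
    (hgx : g x = a) (hga : g a = f y) (hgy : g y = b) (hgb : g b = f x)
    (hgf : ∀ z ∈ s, z ≠ x → z ≠ y → g z = f z) :
    numOrbitsIn f s = numOrbitsIn g (s ∪ {a, b}) + 1 := by
  have hper : s ⊆ periodicPts f := fun z hz => mem_periodicPts_of_mapsTo hs hf hz
  have hper' : s ∪ {a, b} ⊆ periodicPts g := fun z hz => mem_periodicPts_of_mapsTo hgs hg hz
  have hyx : x ∉ forb f y := fun h => hxy (mem_forb_symm (hper hy) h)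
  have hfar : ∀ z ∈ (s \ forb f x) \ forb f y, forb g z = forb f z := by
    rintro z ⟨⟨hz, hzx⟩, hzy⟩
    have hagree : ∀ w ∈ forb f z, g w = f w := fun w hw =>
      hgf w (forb_subset_of_mapsTo hs hz hw) (fun h => hzx (h ▸ mem_forb_symm (hper hz) hw))
        (fun h => hzy (h ▸ mem_forb_symm (hper hz) hw))
    refine Subset.antisymm
      (forb_subset_of_forall_mem (f := g) (mem_forb_self f z) fun w _ hw => ?_)
      (forb_subset_of_agree (hper hz) (hagree z (mem_forb_self f z) ▸ apply_mem_forb g z)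
        fun w hw _ => hagree w hw)
    rw [hagree w hw]
    exact forb_subset_of_mem hw (apply_mem_forb f w)
  have hcycle_y : forb f y ⊆ forb g a :=
    forb_subset_of_agree (hper hy) (hga ▸ apply_mem_forb g a) fun w hw hwy =>
      hgf w (forb_subset_of_mapsTo hs hy hw) (fun h => hyx (h ▸ hw)) hwy
  have hb : b ∈ forb g a :=
    forb_subset_of_mem (hcycle_y (mem_forb_self f y)) (hgy ▸ apply_mem_forb g y)
  have hcycle_x : forb f x ⊆ forb g a :=
    forb_subset_of_agree (hper hx) (forb_subset_of_mem hb (hgb ▸ apply_mem_forb g b))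
      fun w hw hwx => hgf w (forb_subset_of_mapsTo hs hx hw) hwx (fun h => hxy (h ▸ hw))
  have hax : forb g a ⊆ forb g x := forb_subset_of_mem (hgx ▸ apply_mem_forb g x)
  have hmerged : (s ∪ {a, b}) \ forb g x = (s \ forb f x) \ forb f y := by
    ext z
    constructor
    · rintro ⟨hz | rfl | rfl, hzx⟩
      · exact ⟨⟨hz, fun h => hzx (hax (hcycle_x h))⟩, fun h => hzx (hax (hcycle_y h))⟩
      · exact absurd (hax (mem_forb_self g z)) hzx
      · exact absurd (hax hb) hzx
    · rintro hz
      refine ⟨Or.inl hz.1.1, fun h => hz.1.2 (mem_forb_symm (hper hz.1.1) ?_)⟩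
      rw [← hfar z hz]
      exact mem_forb_symm (hper' (Or.inl hx)) h
  rw [numOrbitsIn_eq_sdiff_forb_add_one hs hper hx,
    numOrbitsIn_eq_sdiff_forb_add_one (mapsTo_sdiff_forb hs hper) (sdiff_subset.trans hper)
      ⟨hy, hxy⟩,
    numOrbitsIn_eq_sdiff_forb_add_one hgs hper' (Or.inl hx), hmerged, numOrbitsIn_congr hfar]

lemma reflTransGen_of_iterate {β : Type*} {r : β → β → Prop} {φ : D → β} {n : ℕ}
    (h : ∀ i < n, Relation.ReflTransGen r (φ (f^[i] x)) (φ (f^[i + 1] x))) :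
    Relation.ReflTransGen r (φ x) (φ (f^[n] x)) := by
  induction n with
  | zero => exact .refl
  | succ n ih => exact (ih fun i hi => h i (by omega)).trans (h n (by omega))

end Orbits

section FirstReturn

variable {f : Equiv.Perm D} {s : Set D} {x z : D} {i j k : ℕ}

lemma returnSteps_pos_and_mem (hx : x ∈ s) :
    0 < returnSteps f s x ∧ (⇑f)^[returnSteps f s x] x ∈ s := by
  have hret : (⇑f)^[orderOf f] x ∈ s := by
    rwa [← Equiv.Perm.coe_pow, pow_orderOf_eq_one, Equiv.Perm.coe_one, id]
  exact Nat.sInf_mem (s := {k | 0 < k ∧ (⇑f)^[k] x ∈ s}) ⟨orderOf f, orderOf_pos f, hret⟩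

lemma firstReturn_mem (hx : x ∈ s) : firstReturn f s x ∈ s := (returnSteps_pos_and_mem hx).2

lemma returnSteps_le (hk0 : 0 < k) (hk : (⇑f)^[k] x ∈ s) : returnSteps f s x ≤ k :=
  Nat.sInf_le (show k ∈ {k | 0 < k ∧ (⇑f)^[k] x ∈ s} from ⟨hk0, hk⟩)

lemma iterate_notMem_of_lt_returnSteps (hk0 : 0 < k) (hk : k < returnSteps f s x) :
    (⇑f)^[k] x ∉ s := fun hmem => (returnSteps_le hk0 hmem).not_gt hk

lemma returnSteps_eq_of_minimal (hk0 : 0 < k) (hk : (⇑f)^[k] x ∈ s)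
    (hmin : ∀ i, 0 < i → i < k → (⇑f)^[i] x ∉ s) : returnSteps f s x = k := by
  refine (returnSteps_le hk0 hk).antisymm (not_lt.mp fun hlt => ?_)
  obtain ⟨hpos, hmem⟩ : 0 < returnSteps f s x ∧ (⇑f)^[returnSteps f s x] x ∈ s :=
    Nat.sInf_mem (s := {k | 0 < k ∧ (⇑f)^[k] x ∈ s}) ⟨k, hk0, hk⟩
  exact hmin _ hpos hlt hmem

/-- Distinct corners of `s` (the stretches of the `f`-orbits strictly between two visits to `s`)
are disjoint. -/
lemma eq_of_iterate_eq_of_lt_returnSteps (hx : x ∈ s) (hz : z ∈ s)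
    (hi0 : 0 < i) (hi : i < returnSteps f s x) (hk0 : 0 < k) (hk : k < returnSteps f s z)
    (h : (⇑f)^[i] x = (⇑f)^[k] z) : x = z ∧ i = k := by
  wlog hik : i ≤ k generalizing x z i k
  · obtain ⟨h1, h2⟩ := this hz hx hk0 hk hi0 hi h.symm (by omega)
    exact ⟨h1.symm, h2.symm⟩
  have hxz : x = (⇑f)^[k - i] z := f.injective.iterate i <| by
    rw [← iterate_add_apply, Nat.add_sub_cancel' hik, h]
  rcases Nat.eq_zero_or_pos (k - i) with h0 | h0
  · exact ⟨by rwa [h0, iterate_zero_apply] at hxz, by omega⟩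
  · exact absurd (hxz ▸ hx) (iterate_notMem_of_lt_returnSteps h0 (by omega))

lemma firstReturn_injOn : InjOn (firstReturn f s) s := by
  intro x hx z hz h
  wlog hxz : returnSteps f s x ≤ returnSteps f s z generalizing x z
  · exact (this hz hx h.symm (by omega)).symm
  have hx' : x = (⇑f)^[returnSteps f s z - returnSteps f s x] z :=
    f.injective.iterate (returnSteps f s x) <| by
      rw [← iterate_add_apply, Nat.add_sub_cancel' hxz]
      exact h
  rcases Nat.eq_zero_or_pos (returnSteps f s z - returnSteps f s x) with h0 | h0
  · rwa [h0, iterate_zero_apply] at hx'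
  · exact absurd (hx' ▸ hx) (iterate_notMem_of_lt_returnSteps h0
      (by have := (returnSteps_pos_and_mem (f := f) hx).1; omega))

lemma returnSteps_insert_self (hx : x ∈ s) (hj0 : 0 < j) (hj : j < returnSteps f s x) :
    returnSteps f (insert ((⇑f)^[j] x) s) x = j :=
  returnSteps_eq_of_minimal hj0 (mem_insert _ _) fun i hi0 hij hmem =>
    hmem.elim (fun h => by
      have := (eq_of_iterate_eq_of_lt_returnSteps hx hx hi0 (hij.trans hj) hj0 hj h).2; omega)
      (iterate_notMem_of_lt_returnSteps hi0 (hij.trans hj))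

lemma returnSteps_insert_of_ne (hx : x ∈ s) (hj0 : 0 < j) (hj : j < returnSteps f s x)
    (hz : z ∈ s) (hzx : z ≠ x) :
    returnSteps f (insert ((⇑f)^[j] x) s) z = returnSteps f s z :=
  returnSteps_eq_of_minimal (returnSteps_pos_and_mem hz).1
    (mem_insert_of_mem _ (returnSteps_pos_and_mem hz).2) fun _ hi0 hi hmem =>
      hmem.elim (fun h => hzx (eq_of_iterate_eq_of_lt_returnSteps hz hx hi0 hi hj0 hj h).1)
        (iterate_notMem_of_lt_returnSteps hi0 hi)

lemma firstReturn_insert_self (hx : x ∈ s) (hj0 : 0 < j) (hj : j < returnSteps f s x) :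
    firstReturn f (insert ((⇑f)^[j] x) s) x = (⇑f)^[j] x := by
  rw [firstReturn, returnSteps_insert_self hx hj0 hj]

lemma firstReturn_insert_of_ne (hx : x ∈ s) (hj0 : 0 < j) (hj : j < returnSteps f s x)
    (hz : z ∈ s) (hzx : z ≠ x) :
    firstReturn f (insert ((⇑f)^[j] x) s) z = firstReturn f s z := by
  rw [firstReturn, firstReturn, returnSteps_insert_of_ne hx hj0 hj hz hzx]

lemma firstReturn_insert_iterate (hx : x ∈ s) (hj0 : 0 < j) (hj : j < returnSteps f s x) :
    firstReturn f (insert ((⇑f)^[j] x) s) ((⇑f)^[j] x) = firstReturn f s x := by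
  have hshift : ∀ i, (⇑f)^[i] ((⇑f)^[j] x) = (⇑f)^[i + j] x := fun i =>
    (iterate_add_apply _ _ _ _).symm
  have hret : returnSteps f (insert ((⇑f)^[j] x) s) ((⇑f)^[j] x) = returnSteps f s x - j := by
    refine returnSteps_eq_of_minimal (by omega) ?_ fun i hi0 hi hmem => ?_
    · rw [hshift, Nat.sub_add_cancel hj.le]
      exact mem_insert_of_mem _ (firstReturn_mem hx)
    · rw [hshift] at hmem
      refine hmem.elim (fun h => ?_) (iterate_notMem_of_lt_returnSteps (by omega) (by omega))
      have := (eq_of_iterate_eq_of_lt_returnSteps hx hx (by omega) (by omega) hj0 hj h).2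
      omega
  rw [firstReturn, firstReturn, hret, hshift, Nat.sub_add_cancel hj.le]

end FirstReturn

lemma forb_opp (M : CombMap D) (x : D) : forb (⇑M.opp) x = {x, M.opp x} := by
  have hinv : Involutive M.opp := M.opp_invol
  ext y
  constructor
  · rintro ⟨n, rfl⟩
    rcases Nat.even_or_odd n with hn | hn
    · exact Or.inl (congrFun (hinv.iterate_even hn) x)
    · exact Or.inr (congrFun (hinv.iterate_odd hn) x)
  · rintro (rfl | rfl)
    exacts [mem_forb_self _ _, apply_mem_forb _ _]

lemma opp_mem_pair_iff (M : CombMap D) {x e : D} :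
    M.opp x ∈ ({e, M.opp e} : Set D) ↔ x ∈ ({e, M.opp e} : Set D) := by
  constructor <;> rintro (h | h)
  · subst h
    exact Or.inr (M.opp_invol x).symm
  · exact Or.inl (M.opp.injective h)
  · exact Or.inr (congrArg M.opp h)
  · exact Or.inl (by rw [h, M.opp_invol])

namespace Subcomplex

section Reach

variable {N : CombMap D} (K : Subcomplex N) {A : Set D} {a b e : D}

lemma reachAvoiding_symm (h : K.reachAvoiding A a b) : K.reachAvoiding A b a := by
  refine Relation.reflTransGen_swap.mp (Relation.ReflTransGen.mono (fun x y hxy => ?_) a b h)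
  rcases hxy with ⟨hx, hy, hxy⟩ | ⟨hx, hxA, hoA, rfl⟩
  · exact Or.inl ⟨hy, hx, mem_forb_symm (N.next.injective.mem_periodicPts x) hxy⟩
  · exact Or.inr ⟨K.es_closed x hx, hoA, (N.opp_invol x).symm ▸ hxA, (N.opp_invol x).symm⟩

lemma reachAvoiding_of_reachAvoiding_empty (he : K.reachAvoiding {e, N.opp e} e (N.opp e))
    (hab : K.reachAvoiding ∅ a b) : K.reachAvoiding {e, N.opp e} a b := by
  induction hab with
  | refl => exact .refl
  | @tail x _ _ hstep ih =>
    rcases hstep with hv | ⟨hx, -, -, rfl⟩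
    · exact ih.tail (Or.inl hv)
    · by_cases hxe : x = e
      · subst hxe
        exact ih.trans he
      by_cases hxo : x = N.opp e
      · subst hxo
        rw [N.opp_invol]
        exact ih.trans (K.reachAvoiding_symm he)
      · have hxA : x ∉ ({e, N.opp e} : Set D) := by rintro (h | h) <;> contradiction
        exact ih.tail (Or.inr ⟨hx, hxA, N.opp_mem_pair_iff.not.mpr hxA, rfl⟩)

end Reach

variable {M : CombMap D} (C : Subcomplex M) {A : Set D} {d d' e h x y : D}

lemma opp_mem_es_iff : M.opp x ∈ C.Es ↔ x ∈ C.Es :=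
  ⟨fun h => M.opp_invol x ▸ C.es_closed _ h, C.es_closed x⟩

lemma facePerm_mem_fs_iff : M.facePerm x ∈ C.Fs ↔ x ∈ C.Fs :=
  ⟨fun h => by simpa using perm_inv_mem M.facePerm C.Fs C.fs_closed _ h, C.fs_closed x⟩

lemma notMem_es_of_mem_cornerExterior (h : y ∈ C.cornerExterior d) : y ∉ C.Es := by
  obtain ⟨j, hj0, hj, rfl⟩ := h
  exact iterate_notMem_of_lt_returnSteps hj0 hj

lemma bwalk_apply (x : D) : C.bwalk x = M.opp (firstReturn M.next C.Es x) := rfl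

lemma bwalk_mapsTo_es : MapsTo C.bwalk C.Es C.Es := fun _ hx =>
  C.es_closed _ (firstReturn_mem hx)

lemma bwalk_injOn : InjOn C.bwalk C.Es := fun _ hx _ hz h =>
  firstReturn_injOn hx hz (M.opp.injective h)

lemma bwalk_mapsTo_boundary : MapsTo C.bwalk (C.Es \ C.Fs) (C.Es \ C.Fs) := by
  rintro x ⟨hx, hxF⟩
  refine ⟨C.bwalk_mapsTo_es hx, fun hF => ?_⟩
  obtain ⟨k, hk⟩ := Nat.exists_eq_add_one_of_ne_zero
    (returnSteps_pos_and_mem (f := M.next) hx).1.ne'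
  have hlast : C.bwalk x = M.facePerm ((⇑M.next)^[k] x) := by
    rw [bwalk_apply, firstReturn, hk, iterate_succ_apply']
    rfl
  rw [hlast, facePerm_mem_fs_iff] at hF
  rcases Nat.eq_zero_or_pos k with h0 | h0
  · rw [h0, iterate_zero_apply] at hF
    exact hxF hF
  · exact iterate_notMem_of_lt_returnSteps h0 (by omega) (C.face_edges _ hF)

lemma bwalk_addEdge {C' : Subcomplex M} (hE : C'.Es = C.Es ∪ {e, M.opp e})
    (hd : d ∈ C.Es) (hd' : d' ∈ C.Es) (hdd' : d ≠ d')
    (he : e ∈ C.cornerExterior d) (he' : M.opp e ∈ C.cornerExterior d') :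
    C'.bwalk d = M.opp e ∧ C'.bwalk (M.opp e) = C.bwalk d' ∧
      C'.bwalk d' = e ∧ C'.bwalk e = C.bwalk d ∧
      ∀ z ∈ C.Es, z ≠ d → z ≠ d' → C'.bwalk z = C.bwalk z := by
  have heC := C.notMem_es_of_mem_cornerExterior he
  obtain ⟨j, hj0, hj, rfl⟩ := he
  obtain ⟨j', hj'0, hj', he'⟩ := he'
  have hd₁ : d ∈ insert ((⇑M.next)^[j] d) C.Es := mem_insert_of_mem _ hd
  have hd'₁ : d' ∈ insert ((⇑M.next)^[j] d) C.Es := mem_insert_of_mem _ hd'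
  have hj'₁ : j' < returnSteps M.next (insert ((⇑M.next)^[j] d) C.Es) d' := by
    rwa [returnSteps_insert_of_ne hd hj0 hj hd' hdd'.symm]
  have hEs : C'.Es = insert ((⇑M.next)^[j'] d') (insert ((⇑M.next)^[j] d) C.Es) := by
    rw [hE, ← he', union_insert, union_singleton, insert_comm]
  simp only [bwalk_apply, hEs]
  refine ⟨?_, ?_, ?_, ?_, fun z hz hzd hzd' => ?_⟩
  · rw [firstReturn_insert_of_ne hd'₁ hj'0 hj'₁ hd₁ hdd', firstReturn_insert_self hd hj0 hj,
      he']
  · rw [he', firstReturn_insert_iterate hd'₁ hj'0 hj'₁,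
      firstReturn_insert_of_ne hd hj0 hj hd' hdd'.symm]
  · rw [firstReturn_insert_self hd'₁ hj'0 hj'₁, ← he', M.opp_invol]
  · rw [firstReturn_insert_of_ne hd'₁ hj'0 hj'₁ (mem_insert _ _) fun h => heC (h ▸ hd'),
      firstReturn_insert_iterate hd hj0 hj]
  · rw [firstReturn_insert_of_ne hd'₁ hj'0 hj'₁ (mem_insert_of_mem _ hz) hzd',
      firstReturn_insert_of_ne hd hj0 hj hz hzd]

lemma numBoundaryFaces_addEdge {C' : Subcomplex M} (hE : C'.Es = C.Es ∪ {e, M.opp e})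
    (hF : C'.Fs = C.Fs) (hd : C.BoundaryBrin d) (hd' : C.BoundaryBrin d')
    (hdd' : d' ∉ forb C.bwalk d)
    (he : e ∈ C.cornerExterior d) (he' : M.opp e ∈ C.cornerExterior d') :
    C.numBoundaryFaces = C'.numBoundaryFaces + 1 := by
  have hne : d ≠ d' := fun h => hdd' (h ▸ mem_forb_self _ _)
  obtain ⟨hbd, hbe', hbd', hbe, hbz⟩ := C.bwalk_addEdge hE hd.1 hd'.1 hne he he'
  have hB : C'.Es \ C'.Fs = (C.Es \ C.Fs) ∪ {M.opp e, e} := by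
    have hnotF : ∀ y ∉ C.Es, y ∉ C.Fs := fun y hy hF => hy (C.face_edges y hF)
    ext y
    simp only [hE, hF, mem_sdiff, mem_union, mem_insert_iff, mem_singleton_iff]
    constructor
    · rintro ⟨h | h | h, hyF⟩ <;> tauto
    · rintro (h | rfl | rfl)
      · exact ⟨Or.inl h.1, h.2⟩
      · exact ⟨Or.inr (Or.inr rfl), hnotF _ (C.notMem_es_of_mem_cornerExterior he')⟩
      · exact ⟨Or.inr (Or.inl rfl), hnotF _ (C.notMem_es_of_mem_cornerExterior he)⟩
  rw [numBoundaryFaces, numBoundaryFaces, hB]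
  exact numOrbitsIn_splice C.bwalk_mapsTo_boundary (C.bwalk_injOn.mono sdiff_subset)
    (hB ▸ C'.bwalk_mapsTo_boundary) (hB ▸ C'.bwalk_injOn.mono sdiff_subset) hd hd' hdd'
    hbd hbe' hbd' hbe fun z hz => hbz z hz.1

lemma completeWalk_injective : Injective C.completeWalk := by
  intro a b hab
  simp only [completeWalk, cwalk] at hab
  split_ifs at hab with ha hb hb
  · exact M.next.injective (M.opp.injective hab)
  · exact absurd (hab ▸ (C.opp_mem_es_iff).mpr ha) hb
  · exact absurd (hab.symm ▸ (C.opp_mem_es_iff).mpr hb) ha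
  · exact M.next.injective hab

lemma dphi_completeWalk (h : D) : dphi M C (C.completeWalk h) = M.facePerm h := by
  by_cases hn : M.next h ∈ C.Es
  · simp [completeWalk, cwalk, dphi, hn, C.opp_mem_es_iff, facePerm]
  · simp [completeWalk, cwalk, dphi, hn, facePerm]

/-- One step of a complete boundary walk of `C` is one step, across a corner of a face not in
`C`, in the complementary dual. -/
lemma reachAvoiding_dphi_completeWalk (hF : h ∉ C.Fs) (hA : h ∉ A ∧ M.opp h ∉ A) :
    C.compDual.reachAvoiding A (dphi M C h) (dphi M C (C.completeWalk h)) := by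
  have hface : C.compDual.reachAvoiding A h (M.facePerm h) :=
    .single (Or.inl ⟨hF, mt C.facePerm_mem_fs_iff.mp hF, apply_mem_forb _ _⟩)
  rw [dphi_completeWalk]
  by_cases hE : h ∈ C.Es
  · rwa [dphi, if_pos hE]
  · rw [dphi, if_neg hE]
    refine .head (Or.inr ⟨mt C.opp_mem_es_iff.mp hE, hA.2, ?_, ?_⟩) hface
    · exact (M.opp_invol h).symm ▸ hA.1
    · exact (M.opp_invol h).symm

/-- The brins of the complete boundary walk through the boundary brin `d`. -/
def boundaryWalk (d : D) : Set D :=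
  {h | ∃ x ∈ forb C.bwalk d, ∃ i < returnSteps M.next C.Es x, (⇑M.next)^[i] x = h}

lemma mem_boundaryWalk_of_mem_cornerExterior (he : e ∈ C.cornerExterior d) :
    e ∈ C.boundaryWalk d := by
  obtain ⟨j, -, hj, rfl⟩ := he
  exact ⟨d, mem_forb_self _ _, j, hj, rfl⟩

lemma completeWalk_mapsTo_boundaryWalk (hd : d ∈ C.Es) :
    MapsTo C.completeWalk (C.boundaryWalk d) (C.boundaryWalk d) := by
  rintro _ ⟨x, hx, i, hi, rfl⟩
  have hxE := forb_subset_of_mapsTo C.bwalk_mapsTo_es hd hx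
  rw [completeWalk, cwalk, ← iterate_succ_apply' (⇑M.next)]
  rcases (Nat.succ_le_of_lt hi).eq_or_lt with hlast | hmid
  · rw [if_pos (hlast ▸ firstReturn_mem hxE)]
    refine ⟨C.bwalk x, forb_subset_of_mem hx (apply_mem_forb _ _), 0,
      (returnSteps_pos_and_mem (C.bwalk_mapsTo_es hxE)).1, ?_⟩
    rw [iterate_zero_apply, bwalk_apply, firstReturn, ← hlast]
  · rw [if_neg (iterate_notMem_of_lt_returnSteps i.succ_pos hmid)]
    exact ⟨x, hx, i + 1, hmid, rfl⟩

lemma notMem_fs_of_mem_boundaryWalk (hd : C.BoundaryBrin d) (hy : y ∈ C.boundaryWalk d) :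
    y ∉ C.Fs := by
  obtain ⟨x, hx, i, hi, rfl⟩ := hy
  obtain ⟨hxE, hxF⟩ := forb_subset_of_mapsTo C.bwalk_mapsTo_boundary hd hx
  rcases Nat.eq_zero_or_pos i with rfl | hi0
  · exact hxF
  · exact fun hF => iterate_notMem_of_lt_returnSteps hi0 hi (C.face_edges _ hF)

lemma notMem_boundaryWalk_of_mem_cornerExterior (hd' : d' ∈ C.Es)
    (hdd' : d' ∉ forb C.bwalk d) (hd : d ∈ C.Es) (hy : y ∈ C.cornerExterior d') :
    y ∉ C.boundaryWalk d := by
  have hyE := C.notMem_es_of_mem_cornerExterior hy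
  obtain ⟨j, hj0, hj, rfl⟩ := hy
  rintro ⟨x, hx, i, hi, hxy⟩
  have hxE := forb_subset_of_mapsTo C.bwalk_mapsTo_es hd hx
  rcases Nat.eq_zero_or_pos i with rfl | hi0
  · exact hyE (hxy ▸ hxE)
  · exact hdd' ((eq_of_iterate_eq_of_lt_returnSteps hxE hd' hi0 hi hj0 hj hxy).1 ▸ hx)

lemma reachAvoiding_opp_of_mem_cornerExterior (hd : C.BoundaryBrin d)
    (he : e ∈ C.cornerExterior d) (hoe : M.opp e ∉ C.boundaryWalk d) :
    C.compDual.reachAvoiding {e, M.opp e} e (M.opp e) := by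
  have heE := C.notMem_es_of_mem_cornerExterior he
  have heF : e ∉ C.Fs := fun hF => heE (C.face_edges e hF)
  have hwalk : forb C.completeWalk e ⊆ C.boundaryWalk d :=
    forb_subset_of_mapsTo (C.completeWalk_mapsTo_boundaryWalk hd.1)
      (C.mem_boundaryWalk_of_mem_cornerExterior he)
  set L := minimalPeriod C.completeWalk e
  have hL : 0 < L :=
    minimalPeriod_pos_of_mem_periodicPts (C.completeWalk_injective.mem_periodicPts e)
  have hstep : ∀ i < L - 1, C.compDual.reachAvoiding {e, M.opp e}
      (dphi M C (C.completeWalk^[i] (C.completeWalk e)))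
      (dphi M C (C.completeWalk^[i + 1] (C.completeWalk e))) := by
    intro i hi
    rw [iterate_succ_apply', ← iterate_succ_apply]
    have hmem := hwalk ⟨i + 1, rfl⟩
    have hne : C.completeWalk^[i + 1] e ∉ ({e, M.opp e} : Set D) := by
      rintro (h | h)
      · exact not_isPeriodicPt_of_pos_of_lt_minimalPeriod i.succ_ne_zero (by omega) h
      · exact hoe (h ▸ hmem)
    exact C.reachAvoiding_dphi_completeWalk (C.notMem_fs_of_mem_boundaryWalk hd hmem)
      ⟨hne, M.opp_mem_pair_iff.not.mpr hne⟩
  have hchain := reflTransGen_of_iterate hstep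
  rw [← iterate_succ_apply, show (L - 1).succ = L by omega, iterate_minimalPeriod,
    dphi_completeWalk, show dphi M C e = M.opp e from if_neg heE] at hchain
  exact .head (Or.inl ⟨heF, mt C.facePerm_mem_fs_iff.mp heF, apply_mem_forb _ _⟩) hchain

end Subcomplex

section AddEdge

variable {M : CombMap D} {C C' : Subcomplex M} {e : D}

lemma IsAddEdge.eulerChar_eq (hadd : IsAddEdge C e C') (he : e ∉ C.Es) :
    C'.eulerChar = C.eulerChar - 1 := by
  obtain ⟨hF, hE, hV⟩ := hadd
  have hedges : numOrbitsIn (⇑M.opp) C'.Es = numOrbitsIn (⇑M.opp) C.Es + 1 := by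
    rw [hE, ← forb_opp]
    exact numOrbitsIn_union_forb C.es_closed (M.opp.injective.mem_periodicPts e) he
  simp only [Subcomplex.eulerChar, hV, hF, hedges]
  push_cast
  ring

lemma IsAddEdge.compDual_conn (hadd : IsAddEdge C e C')
    (h : ∀ a ∈ C.compDual.Vs, ∀ b ∈ C.compDual.Vs,
      C.compDual.reachAvoiding {e, M.opp e} a b) :
    C'.compDual.Conn := by
  obtain ⟨hF, hE, -⟩ := hadd
  have hVs : C'.compDual.Vs = C.compDual.Vs := congrArg compl hF
  intro a ha b hb
  refine Relation.ReflTransGen.mono (fun x y hxy => ?_) a b (h a (hVs ▸ ha) b (hVs ▸ hb))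
  rcases hxy with ⟨hx, hy, hxy⟩ | ⟨hx, hxA, hoA, rfl⟩
  · exact Or.inl ⟨hVs ▸ hx, hVs ▸ hy, hxy⟩
  · refine Or.inr ⟨?_, notMem_empty _, notMem_empty _, rfl⟩
    show x ∉ C'.Es
    rw [hE]
    rintro (h | h)
    exacts [hx h, hxA h]

end AddEdge

end CombMap

open CombMap in
theorem merge_effect_general
    {D : Type} [Fintype D] [DecidableEq D]
    (M : CombMap D)
    (C : Subcomplex M) (hD : C.compDual.Conn)
    (e : D) (he : C.MergeEdge e)
    (C' : Subcomplex M) (hadd : IsAddEdge C e C') :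
    ¬ C.compDual.Bridge e ∧
    C'.compDual.Conn ∧
    C.numBoundaryFaces = C'.numBoundaryFaces + 1 ∧
    C'.eulerChar = C.eulerChar - 1 ∧
    C'.assocEulerChar = C.assocEulerChar - 2 ∧
    (∀ g' : ℤ, C.assocHasGenus g' → C'.assocHasGenus (g' + 1)) := by
  obtain ⟨⟨heC, -⟩, d, d', hd, hed, hd', hed', hdd'⟩ := he
  obtain ⟨hdd', -⟩ := not_or.mp hdd'
  have hreach : C.compDual.reachAvoiding {e, M.opp e} e (M.opp e) :=
    C.reachAvoiding_opp_of_mem_cornerExterior hd hed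
      (C.notMem_boundaryWalk_of_mem_cornerExterior hd'.1 hdd' hd.1 hed')
  have hbypass : ∀ a ∈ C.compDual.Vs, ∀ b ∈ C.compDual.Vs,
      C.compDual.reachAvoiding {e, M.opp e} a b := fun a ha b hb =>
    C.compDual.reachAvoiding_of_reachAvoiding_empty hreach (hD a ha b hb)
  have hfaces : C.numBoundaryFaces = C'.numBoundaryFaces + 1 :=
    C.numBoundaryFaces_addEdge hadd.2.1 hadd.1 hd hd' hdd' hed hed'
  have hchi : C'.eulerChar = C.eulerChar - 1 := hadd.eulerChar_eq heC
  have hassoc : C'.assocEulerChar = C.assocEulerChar - 2 := by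
    simp only [Subcomplex.assocEulerChar, hchi, hfaces]
    push_cast
    ring
  refine ⟨fun hB => hB.2 hbypass, hadd.compDual_conn hbypass, hfaces, hchi, hassoc,
    fun g' hg => ?_⟩
  rw [Subcomplex.assocHasGenus, hassoc, hg]
  ring

open CombMap in
theorem merge_effect
    {D : Type} [Fintype D] [DecidableEq D]
    (M : CombMap D) (g : ℕ) (hT : IsTriang M g)
    (C : Subcomplex M) (hC : C.Conn) (hD : C.compDual.Conn)
    (e : D) (he : C.MergeEdge e)
    (C' : Subcomplex M) (hadd : IsAddEdge C e C') :
    ¬ C.compDual.Bridge e ∧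
    C'.compDual.Conn ∧
    C.numBoundaryFaces = C'.numBoundaryFaces + 1 ∧
    C'.eulerChar = C.eulerChar - 1 ∧
    C'.assocEulerChar = C.assocEulerChar - 2 ∧
    (∀ g' : ℤ, C.assocHasGenus g' → C'.assocHasGenus (g' + 1)) :=
  merge_effect_general M C hD e he C' hadd
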